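/- Let p be a prime, and let L be a topological group such that L = U₁ ⋯ U_l where each Uᵢ is a subgroup isomorphic (as a topological group) to the additive group (ℚ_p, +), via maps uᵢ : ℚ_p → L that are restrictions of polynomial maps. Then any continuous homomorphism φ from L to a compact Hausdorff topological group C, such that each composition φ ∘ uᵢ : ℚ_p → C is given coordinatewise by polynomial functions into ℚ_p (i.e., factors through bounded polynomial maps), is the trivial homomorphism. -/

import Mathlib

open Filter Polynomial

/-- A polynomial over `ℚ_p` with bounded values is constant. -/
lemma bounded_poly_constant (p : ℕ) [Fact p.Prime] (g : Polynomial ℚ_[p]) (M : ℝ)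
    (hb : ∀ x, ‖g.eval x‖ ≤ M) : ∀ x, g.eval x = g.eval 0 := by
  by_cases hd : 0 < g.degree
  · exfalso
    have hp1 : (1 : ℝ) < (p : ℝ) := by
      exact_mod_cast (Fact.out : p.Prime).one_lt
    have hz : Tendsto (fun n : ℕ => ‖((p : ℚ_[p])⁻¹) ^ n‖) atTop atTop := by
      have : ∀ n : ℕ, ‖((p : ℚ_[p])⁻¹) ^ n‖ = (p : ℝ) ^ n := by
        intro n
        rw [norm_pow, norm_inv, Padic.norm_p, inv_inv]
      simp only [this]
      exact tendsto_pow_atTop_atTop_of_one_lt hp1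
    have := g.tendsto_norm_atTop hd hz
    obtain ⟨n, hn⟩ := (this.eventually (eventually_gt_atTop M)).exists
    exact absurd (hb _) (not_le.2 hn)
  · intro x
    rw [Polynomial.eq_C_of_degree_le_zero (le_of_not_gt hd)]
    simp

/-- If a topological group `L` is a product `U₁ ⋯ U_l` of one-parameter subgroups
parametrized by `ℚ_p`, then any continuous homomorphism from `L` to a compact group
which is given coordinatewise by polynomial functions on each one-parameter subgroup
is trivial. -/
theorem trivial_hom_to_compact_of_polynomial (p : ℕ) [Fact p.Prime] (l : ℕ)
    (L : Type) [Group L] [TopologicalSpace L] [IsTopologicalGroup L]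
    (u : Fin l → ℚ_[p] → L)
    (hadd : ∀ i x y, u i (x + y) = u i x * u i y)
    (hinj : ∀ i, Function.Injective (u i))
    (hcont : ∀ i, Continuous (u i))
    (hgen : ∀ g : L, ∃ f : Fin l → ℚ_[p], g = (List.ofFn fun i => u i (f i)).prod)
    (C : Type) [Group C] [TopologicalSpace C] [IsTopologicalGroup C] [CompactSpace C] [T2Space C]
    (φ : L →* C) (hφ : Continuous φ)
    (hpoly : ∀ i, ∃ (m : ℕ) (g : Fin m → Polynomial ℚ_[p]) (ι : C → (Fin m → ℚ_[p])),
      Continuous ι ∧ Function.Injective ι ∧ ∀ x j, ι (φ (u i x)) j = (g j).eval x) :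
    ∀ x, φ x = 1 := by
  -- u i 0 = 1
  have hu0 : ∀ i, u i 0 = 1 := by
    intro i
    have h := hadd i 0 0
    rw [add_zero] at h
    exact (left_eq_mul.mp h)
  -- each φ (u i x) = 1
  have key : ∀ i x, φ (u i x) = 1 := by
    intro i x
    obtain ⟨m, g, ι, hι, hιinj, hval⟩ := hpoly i
    -- bound on range of ι
    obtain ⟨M, hM⟩ := (isCompact_range hι).isBounded.exists_norm_le
    have hbd : ∀ j, ∀ y : ℚ_[p], ‖(g j).eval y‖ ≤ M := by
      intro j y
      rw [← hval y j]
      exact (norm_le_pi_norm _ j).trans (hM _ ⟨_, rfl⟩)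
    have hconst : ι (φ (u i x)) = ι (φ (u i 0)) := by
      funext j
      rw [hval x j, hval 0 j]
      exact bounded_poly_constant p (g j) M (hbd j) x
    have := hιinj hconst
    rw [this, hu0 i, map_one]
  intro x
  obtain ⟨f, hf⟩ := hgen x
  rw [hf, map_list_prod]
  apply List.prod_eq_one
  intro a ha
  rw [List.mem_map] at ha
  obtain ⟨b, hb, rfl⟩ := ha
  rw [List.mem_ofFn] at hb
  obtain ⟨i, rfl⟩ := hb
  exact key i (f i)
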